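/- arXiv:1503.05316 — 2 statements merged into one kernel-verified Lean document; each statement's English description precedes it below -/
import Mathlib

section
/- Let n ≥ 1, i, j ∈ [n], and π ∈ B_n. If π(i) = j (i.e., π(i) is positive with value j), then inv_i(π) = #{k ∈ {i+1, ..., n} : j > |π(k)|}. -/
/-- A signed permutation `π` of `[n]`: `π(i) = ε i · σ(i)` with `σ` a permutation
of `[n]` and signs `ε i ∈ {±1}`.  Positions are encoded by `Fin n`
(position `i ∈ [n]` corresponds to `⟨i-1, _⟩ : Fin n`). -/
structure SignedPerm (n : ℕ) where
  σ : Equiv.Perm (Fin n)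
  ε : Fin n → ℤ
  hε : ∀ i, ε i = 1 ∨ ε i = -1

namespace SignedPerm

variable {n : ℕ}

/-- The signed value `π(i) = ε i · σ(i) ∈ {-n, …, -1, 1, …, n}` (1-based value). -/
def val (π : SignedPerm n) (i : Fin n) : ℤ :=
  π.ε i * ((π.σ i : ℕ) + 1)

/-- The standard basis vector `e i` of `ℝ^n`. -/
def e (i : Fin n) : Fin n → ℝ := Pi.single i 1

/-- The action of a signed permutation on `ℝ^n`, determined by
`π · e i = ε i · e (σ i)`. -/
def act (π : SignedPerm n) (v : Fin n → ℝ) : Fin n → ℝ :=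
  fun j => (π.ε (π.σ.symm j) : ℝ) * v (π.σ.symm j)

/-- The positive root system `Φₙ⁺ = {e k, e i + e j, e i - e j : k, i < j}` of `Bₙ`. -/
def PhiPos (n : ℕ) : Set (Fin n → ℝ) :=
  {v | (∃ k : Fin n, v = e k) ∨ ∃ i j : Fin n, i < j ∧ (v = e i + e j ∨ v = e i - e j)}

/-- The positive roots `Φₙ,ᵢ⁺ = {e i, e i + e j, e i - e j : i < j ≤ n}`. -/
def PhiPosI (n : ℕ) (i : Fin n) : Set (Fin n → ℝ) :=
  {v | v = e i ∨ ∃ j : Fin n, i < j ∧ (v = e i + e j ∨ v = e i - e j)}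

/-- The `i`-inversion number `invᵢ π = #{v ∈ Φₙ,ᵢ⁺ : π · v ∈ -Φₙ⁺}`. -/
noncomputable def invi (i : Fin n) (π : SignedPerm n) : ℕ :=
  Set.ncard {v | v ∈ PhiPosI n i ∧ -(π.act v) ∈ PhiPos n}

/-- The inversion number `inv π = #{v ∈ Φₙ⁺ : π · v ∈ -Φₙ⁺}`. -/
noncomputable def inv (π : SignedPerm n) : ℕ :=
  Set.ncard {v | v ∈ PhiPos n ∧ -(π.act v) ∈ PhiPos n}

lemma e_apply (i j : Fin n) : e i j = if j = i then 1 else 0 := by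
  simp [e, Pi.single_apply]

lemma act_e (π : SignedPerm n) (a : Fin n) :
    π.act (e a) = fun j => (π.ε a : ℝ) * e (π.σ a) j := by
  funext j
  simp only [act, e_apply]
  by_cases hj : j = π.σ a
  · have : π.σ.symm j = a := by rw [hj]; simp
    simp [this, hj]
  · have h1 : π.σ.symm j ≠ a := fun h => hj (by rw [← h]; simp)
    simp [h1, hj]

lemma phiPos_first {v : Fin n → ℝ} (hv : v ∈ PhiPos n) :
    ∃ a, v a = 1 ∧ ∀ b, b < a → v b = 0 := by
  rcases hv with ⟨k, rfl⟩ | ⟨a, b, hab, rfl | rfl⟩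
  · exact ⟨k, by simp [e_apply], fun c hc => by simp [e_apply, ne_of_lt hc]⟩
  · refine ⟨a, ?_, fun c hc => ?_⟩
    · simp [e_apply, hab.ne]
    · have h1 : c ≠ a := ne_of_lt hc
      have h2 : c ≠ b := ne_of_lt (hc.trans hab)
      simp [e_apply, h1, h2]
  · refine ⟨a, ?_, fun c hc => ?_⟩
    · simp [e_apply, hab.ne]
    · have h1 : c ≠ a := ne_of_lt hc
      have h2 : c ≠ b := ne_of_lt (hc.trans hab)
      simp [e_apply, h1, h2]

lemma neg_e_notMem (a : Fin n) : -(e a) ∉ PhiPos n := by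
  intro h
  obtain ⟨c, hc, -⟩ := phiPos_first h
  by_cases hca : c = a <;> simp [e_apply, hca] at hc <;> norm_num at hc

lemma neg_add_notMem {a b : Fin n} (hab : a ≠ b) : -(e a + e b) ∉ PhiPos n := by
  intro h
  obtain ⟨c, hc, -⟩ := phiPos_first h
  by_cases hca : c = a <;> by_cases hcb : c = b <;>
    simp [e_apply, hca, hcb, hab, hab.symm] at hc <;> norm_num at hc

lemma lt_of_sub_mem {p q : Fin n} (hpq : p ≠ q) (h : e p - e q ∈ PhiPos n) : p < q := by
  obtain ⟨c, hc, hz⟩ := phiPos_first h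
  have hcp : c = p := by
    by_contra hcp
    by_cases hcq : c = q <;> simp [e_apply, hcp, hcq, hpq, hpq.symm] at hc <;> norm_num at hc
  subst hcp
  rcases lt_or_gt_of_ne hpq with h1 | h1
  · exact h1
  · exfalso
    have := hz q h1
    simp [e_apply, hpq.symm] at this


lemma act_add (π : SignedPerm n) (u v : Fin n → ℝ) :
    π.act (u + v) = π.act u + π.act v := by
  funext j; simp [act, mul_add]

lemma act_sub (π : SignedPerm n) (u v : Fin n → ℝ) :
    π.act (u - v) = π.act u - π.act v := by
  funext j; simp [act, mul_sub]

lemma act_smul (π : SignedPerm n) (c : ℝ) (v : Fin n → ℝ) :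
    π.act (c • v) = c • π.act v := by
  funext j; simp [act]; ring

end SignedPerm

open SignedPerm in
/-- If `π(i) = j > 0`, then
`invᵢ(π) = #{k ∈ {i+1, …, n} : j > |π(k)|}`. -/
theorem invi_of_pos (n : ℕ) (hn : 1 ≤ n) (i : Fin n) (j : ℕ) (hj1 : 1 ≤ j) (hjn : j ≤ n)
    (π : SignedPerm n) (h : π.val i = (j : ℤ)) :
    invi i π =
      (Finset.univ.filter fun k : Fin n => i < k ∧ |π.val k| < (j : ℤ)).card := by
  have hεi : π.ε i = 1 := by
    rcases π.hε i with h1 | h1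
    · exact h1
    · exfalso; rw [val, h1] at h; omega
  have hσi : ((π.σ i : ℕ) : ℤ) + 1 = (j : ℤ) := by
    rw [val, hεi] at h; omega
  have habs : ∀ k, |π.val k| = ((π.σ k : ℕ) : ℤ) + 1 := by
    intro k
    rcases π.hε k with h1 | h1 <;> rw [val, h1]
    · rw [one_mul, abs_of_nonneg (by positivity)]
    · rw [neg_one_mul, abs_neg, abs_of_nonneg (by positivity)]
  -- rewrite RHS filter
  have hfilter : (Finset.univ.filter fun k : Fin n => i < k ∧ |π.val k| < (j : ℤ)) =
      (Finset.univ.filter fun k : Fin n => i < k ∧ π.σ k < π.σ i) := by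
    apply Finset.filter_congr
    intro k _
    have : (π.σ k < π.σ i) ↔ ((π.σ k : ℕ) < (π.σ i : ℕ)) := Fin.lt_def
    rw [habs k, this]
    constructor
    · rintro ⟨h1, h2⟩; exact ⟨h1, by omega⟩
    · rintro ⟨h1, h2⟩; exact ⟨h1, by omega⟩
  rw [hfilter]
  set F : Finset (Fin n) := Finset.univ.filter fun k : Fin n => i < k ∧ π.σ k < π.σ i with hF
  set f : Fin n → (Fin n → ℝ) := fun k => e i - (π.ε k : ℝ) • e k with hf
  -- key set equality
  have hset : {v | v ∈ PhiPosI n i ∧ -(π.act v) ∈ PhiPos n} = ↑(F.image f) := by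
    ext v
    simp only [Set.mem_setOf_eq, Finset.coe_image, Set.mem_image, Finset.mem_coe,
      Finset.mem_filter, Finset.mem_univ, true_and, hF]
    constructor
    · rintro ⟨hv1, hv2⟩
      rcases hv1 with rfl | ⟨k, hik, rfl | rfl⟩
      · exfalso
        have hact : π.act (e i) = e (π.σ i) := by
          rw [act_e, hεi]; funext x; simp
        rw [hact] at hv2
        exact neg_e_notMem _ hv2
      · -- v = e i + e k
        have hik' : i ≠ k := ne_of_lt hik
        have hσik : π.σ i ≠ π.σ k := fun hh => hik' (π.σ.injective hh)
        rcases π.hε k with h1 | h1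
        · exfalso
          have hact : π.act (e i + e k) = e (π.σ i) + e (π.σ k) := by
            rw [act_add, act_e, act_e, hεi, h1]; funext x; simp
          rw [hact] at hv2
          exact neg_add_notMem hσik hv2
        · have hact : -(π.act (e i + e k)) = e (π.σ k) - e (π.σ i) := by
            rw [act_add, act_e, act_e, hεi, h1]; funext x; simp; try ring
          rw [hact] at hv2
          have hlt := lt_of_sub_mem hσik.symm hv2
          refine ⟨k, ⟨hik, hlt⟩, ?_⟩
          rw [hf]; simp only [h1]; funext x; simp; try ring
      · -- v = e i - e k
        have hik' : i ≠ k := ne_of_lt hik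
        have hσik : π.σ i ≠ π.σ k := fun hh => hik' (π.σ.injective hh)
        rcases π.hε k with h1 | h1
        · have hact : -(π.act (e i - e k)) = e (π.σ k) - e (π.σ i) := by
            rw [act_sub, act_e, act_e, hεi, h1]; funext x; simp; try ring
          rw [hact] at hv2
          have hlt := lt_of_sub_mem hσik.symm hv2
          refine ⟨k, ⟨hik, hlt⟩, ?_⟩
          rw [hf]; simp only [h1]; funext x; simp
        · exfalso
          have hact : -(π.act (e i - e k)) = -(e (π.σ i) + e (π.σ k)) := by
            rw [act_sub, act_e, act_e, hεi, h1]; funext x; simp; try ring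
          rw [hact] at hv2
          exact neg_add_notMem hσik hv2
    · rintro ⟨k, ⟨hik, hlt⟩, rfl⟩
      have hik' : i ≠ k := ne_of_lt hik
      have hσik : π.σ k ≠ π.σ i := fun hh => hik' (π.σ.injective hh).symm
      constructor
      · rcases π.hε k with h1 | h1
        · right; exact ⟨k, hik, Or.inr (by rw [hf]; simp only [h1]; funext x; simp)⟩
        · right; exact ⟨k, hik, Or.inl (by rw [hf]; simp only [h1]; funext x; simp; try ring)⟩
      · have hε2 : (π.ε k : ℝ) * (π.ε k : ℝ) = 1 := by
          rcases π.hε k with h1 | h1 <;> rw [h1] <;> norm_num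
        have hact : -(π.act (f k)) = e (π.σ k) - e (π.σ i) := by
          have hfk : f k = e i - (π.ε k : ℝ) • e k := by rw [hf]
          rw [hfk, act_sub, act_smul, act_e, act_e, hεi]
          funext x
          simp only [Pi.neg_apply, Pi.sub_apply, Pi.smul_apply, smul_eq_mul]
          rw [show (π.ε k : ℝ) * ((π.ε k : ℝ) * e (π.σ k) x) = e (π.σ k) x by
            rw [← mul_assoc, hε2, one_mul]]
          push_cast
          ring
        rw [hact]
        exact Or.inr ⟨π.σ k, π.σ i, hlt, Or.inr rfl⟩
  rw [invi, hset, Set.ncard_coe_finset]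
  rw [Finset.card_image_of_injOn]
  intro k hk k' hk' hkk
  by_contra hne
  simp only [hF, Finset.mem_coe, Finset.mem_filter] at hk hk'
  have h1 := congrFun hkk k'
  have hik : i ≠ k' := ne_of_lt hk'.2.1
  have hne' : k' ≠ k := fun hh => hne hh.symm
  simp only [hf, Pi.sub_apply, Pi.smul_apply, smul_eq_mul, e_apply,
    if_neg (Ne.symm hik), if_neg hne', if_pos rfl] at h1
  rcases π.hε k' with h2 | h2 <;> rw [h2] at h1 <;> norm_num at h1
end

section
/- Let n ≥ 1, i, j ∈ [n], and π ∈ B_n. If π(i) = −j (i.e., π(i) is negative with absolute value j), then inv_i(π) = 1 + #{k ∈ {i+1, ..., n} : j > |π(k)|} + 2·#{k ∈ {i+1, ..., n} : j < |π(k)|}. -/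
namespace SignedPermAux
open SignedPerm

variable {n : ℕ}

lemma e_apply (a b : Fin n) : e a b = if b = a then 1 else 0 := Pi.single_apply a 1 b

lemma e_apply_self (a : Fin n) : e a a = 1 := by simp [e_apply]

lemma e_apply_ne {a b : Fin n} (h : b ≠ a) : e a b = 0 := by simp [e_apply, h]

lemma e_inj {a b : Fin n} (h : e a = e b) : a = b := by
  by_contra hab
  have h1 := congrFun h a
  rw [e_apply_self, e_apply_ne (fun hc => hab hc)] at h1
  norm_num at h1

lemma act_e (π : SignedPerm n) (m : Fin n) :
    π.act (e m) = fun x => (π.ε m : ℝ) * e (π.σ m) x := by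
  funext x
  simp only [SignedPerm.act, e_apply]
  rcases eq_or_ne x (π.σ m) with hx | hx
  · subst hx; simp
  · have h1 : π.σ.symm x ≠ m := by
      rw [Ne, Equiv.symm_apply_eq]; exact hx
    simp [h1, hx]

lemma act_add (π : SignedPerm n) (u v : Fin n → ℝ) :
    π.act (u + v) = π.act u + π.act v := by
  funext x; simp [SignedPerm.act, mul_add]

lemma act_sub (π : SignedPerm n) (u v : Fin n → ℝ) :
    π.act (u - v) = π.act u - π.act v := by
  funext x; simp [SignedPerm.act, mul_sub]

lemma mem_e (a : Fin n) : e a ∈ PhiPos n := Or.inl ⟨a, rfl⟩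

lemma mem_add {a b : Fin n} (h : a ≠ b) : e a + e b ∈ PhiPos n := by
  rcases lt_or_gt_of_ne h with hlt | hgt
  · exact Or.inr ⟨a, b, hlt, Or.inl rfl⟩
  · exact Or.inr ⟨b, a, hgt, Or.inl (by rw [add_comm])⟩

lemma mem_sub_iff {a b : Fin n} (h : a ≠ b) : (e a - e b ∈ PhiPos n) ↔ a < b := by
  have h' : ¬ (b = a) := fun hc => h hc.symm
  constructor
  · rintro (⟨k, hk⟩ | ⟨p, q, hpq, hv | hv⟩)
    · have h1 := congrFun hk b
      simp only [Pi.sub_apply, e_apply, if_neg h', eq_self_iff_true, if_true] at h1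
      split_ifs at h1 <;> norm_num at h1
    · have h1 := congrFun hv b
      simp only [Pi.sub_apply, Pi.add_apply, e_apply, if_neg h', eq_self_iff_true, if_true] at h1
      split_ifs at h1 <;> norm_num at h1
    · have h1 := congrFun hv a
      have h2 := congrFun hv b
      simp only [Pi.sub_apply, e_apply, if_neg h', if_neg h, eq_self_iff_true, if_true] at h1 h2
      have hap : a = p := by
        by_contra hc
        rw [if_neg hc] at h1
        split_ifs at h1 <;> norm_num at h1
      have hbq : b = q := by
        by_contra hc
        rw [if_neg hc] at h2
        split_ifs at h2 <;> norm_num at h2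
      rw [hap, hbq]; exact hpq
  · intro hab; exact Or.inr ⟨a, b, hab, Or.inr rfl⟩


lemma neg_act_e (π : SignedPerm n) {i : Fin n} (hi : π.ε i = -1) :
    -(π.act (e i)) = e (π.σ i) := by
  funext x
  simp [act_e, hi]

lemma naa1 (π : SignedPerm n) {i : Fin n} (hi : π.ε i = -1) (k : Fin n) (hk : π.ε k = 1) :
    -(π.act (e i + e k)) = e (π.σ i) - e (π.σ k) := by
  funext x
  simp only [act_add, Pi.neg_apply, Pi.add_apply, Pi.sub_apply, act_e, hi, hk]
  push_cast; ring

lemma naa2 (π : SignedPerm n) {i : Fin n} (hi : π.ε i = -1) (k : Fin n) (hk : π.ε k = -1) :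
    -(π.act (e i + e k)) = e (π.σ i) + e (π.σ k) := by
  funext x
  simp only [act_add, Pi.neg_apply, Pi.add_apply, act_e, hi, hk]
  push_cast; ring

lemma nas1 (π : SignedPerm n) {i : Fin n} (hi : π.ε i = -1) (k : Fin n) (hk : π.ε k = 1) :
    -(π.act (e i - e k)) = e (π.σ i) + e (π.σ k) := by
  funext x
  simp only [act_sub, Pi.neg_apply, Pi.sub_apply, Pi.add_apply, act_e, hi, hk]
  push_cast; ring

lemma nas2 (π : SignedPerm n) {i : Fin n} (hi : π.ε i = -1) (k : Fin n) (hk : π.ε k = -1) :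
    -(π.act (e i - e k)) = e (π.σ i) - e (π.σ k) := by
  funext x
  simp only [act_sub, Pi.neg_apply, Pi.sub_apply, act_e, hi, hk]
  push_cast; ring

lemma cond_add (π : SignedPerm n) (i k : Fin n) (hi : π.ε i = -1) (hik : i < k) :
    (-(π.act (e i + e k)) ∈ PhiPos n) ↔ (π.ε k = -1 ∨ π.σ i < π.σ k) := by
  have hne : π.σ i ≠ π.σ k := fun hc => (ne_of_lt hik) (π.σ.injective hc)
  rcases π.hε k with hk | hk
  · rw [naa1 π hi k hk, mem_sub_iff hne]
    constructor
    · exact fun hlt => Or.inr hlt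
    · rintro (hc | hlt)
      · rw [hk] at hc; norm_num at hc
      · exact hlt
  · rw [naa2 π hi k hk]
    simp [hk, mem_add hne]

lemma cond_sub (π : SignedPerm n) (i k : Fin n) (hi : π.ε i = -1) (hik : i < k) :
    (-(π.act (e i - e k)) ∈ PhiPos n) ↔ (π.ε k = 1 ∨ π.σ i < π.σ k) := by
  have hne : π.σ i ≠ π.σ k := fun hc => (ne_of_lt hik) (π.σ.injective hc)
  rcases π.hε k with hk | hk
  · rw [nas1 π hi k hk]
    simp [hk, mem_add hne]
  · rw [nas2 π hi k hk, mem_sub_iff hne]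
    constructor
    · exact fun hlt => Or.inr hlt
    · rintro (hc | hlt)
      · rw [hk] at hc; norm_num at hc
      · exact hlt

end SignedPermAux

open SignedPerm in
/-- If `π(i) = -j` with `j > 0`, then
`invᵢ(π) = 1 + #{k ∈ {i+1, …, n} : j > |π(k)|} + 2·#{k ∈ {i+1, …, n} : j < |π(k)|}`. -/
theorem invi_of_neg (n : ℕ) (hn : 1 ≤ n) (i : Fin n) (j : ℕ) (hj1 : 1 ≤ j) (hjn : j ≤ n)
    (π : SignedPerm n) (h : π.val i = -(j : ℤ)) :
    invi i π =
      1 + (Finset.univ.filter fun k : Fin n => i < k ∧ |π.val k| < (j : ℤ)).card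
        + 2 * (Finset.univ.filter fun k : Fin n => i < k ∧ (j : ℤ) < |π.val k|).card := by
  open SignedPermAux in
  exact by
    classical
    have hεi : π.ε i = -1 := by
      rcases π.hε i with he | he
      · exfalso; rw [SignedPerm.val, he, one_mul] at h; omega
      · exact he
    have hji : ((π.σ i : ℕ) : ℤ) + 1 = (j : ℤ) := by
      rw [SignedPerm.val, hεi] at h; omega
    have habs : ∀ k : Fin n, |π.val k| = ((π.σ k : ℕ) : ℤ) + 1 := by
      intro k
      have hx : (0:ℤ) ≤ ((π.σ k : ℕ) : ℤ) + 1 := by positivity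
      rcases π.hε k with he | he <;> rw [SignedPerm.val, he]
      · rw [one_mul, abs_of_nonneg hx]
      · rw [neg_one_mul, abs_neg, abs_of_nonneg hx]
    set Pf : Finset (Fin n) :=
      Finset.univ.filter (fun k => i < k ∧ (π.ε k = -1 ∨ π.σ i < π.σ k)) with hPf
    set Mf : Finset (Fin n) :=
      Finset.univ.filter (fun k => i < k ∧ (π.ε k = 1 ∨ π.σ i < π.σ k)) with hMf
    have hS : {v | v ∈ PhiPosI n i ∧ -(π.act v) ∈ PhiPos n}
        = insert (e i) (((fun k => e i + e k) '' ↑Pf) ∪ ((fun k => e i - e k) '' ↑Mf)) := by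
      ext v
      simp only [Set.mem_setOf_eq, PhiPosI, Set.mem_insert_iff, Set.mem_union, Set.mem_image,
        Finset.mem_coe, hPf, hMf, Finset.mem_filter, Finset.mem_univ, true_and]
      constructor
      · rintro ⟨hv1 | ⟨k, hik, rfl | rfl⟩, hv2⟩
        · exact Or.inl hv1
        · exact Or.inr (Or.inl ⟨k, ⟨hik, (cond_add π i k hεi hik).mp hv2⟩, rfl⟩)
        · exact Or.inr (Or.inr ⟨k, ⟨hik, (cond_sub π i k hεi hik).mp hv2⟩, rfl⟩)
      · rintro (rfl | ⟨k, ⟨hik, hc⟩, rfl⟩ | ⟨k, ⟨hik, hc⟩, rfl⟩)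
        · exact ⟨Or.inl rfl, by rw [neg_act_e π hεi]; exact mem_e _⟩
        · exact ⟨Or.inr ⟨k, hik, Or.inl rfl⟩, (cond_add π i k hεi hik).mpr hc⟩
        · exact ⟨Or.inr ⟨k, hik, Or.inr rfl⟩, (cond_sub π i k hεi hik).mpr hc⟩
    have hinjA : Function.Injective (fun k : Fin n => e i + e k) := by
      intro a b hab
      exact e_inj (add_left_cancel hab)
    have hinjB : Function.Injective (fun k : Fin n => e i - e k) := by
      intro a b hab
      exact e_inj (sub_right_inj.mp hab)
    have hAne : ∀ k : Fin n, i < k → e i + e k ≠ e i := by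
      intro k hik hc
      have h1 := congrFun hc k
      rw [Pi.add_apply, e_apply_ne (ne_of_gt hik), e_apply_self] at h1
      norm_num at h1
    have hBne : ∀ k : Fin n, i < k → e i - e k ≠ e i := by
      intro k hik hc
      have h1 := congrFun hc k
      rw [Pi.sub_apply, e_apply_ne (ne_of_gt hik), e_apply_self] at h1
      norm_num at h1
    have hfA : ((fun k : Fin n => e i + e k) '' ↑Pf).Finite := (Pf.finite_toSet).image _
    have hfB : ((fun k : Fin n => e i - e k) '' ↑Mf).Finite := (Mf.finite_toSet).image _
    have hmemP : ∀ k ∈ Pf, i < k := by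
      intro k hk; rw [hPf, Finset.mem_filter] at hk; exact hk.2.1
    have hmemM : ∀ k ∈ Mf, i < k := by
      intro k hk; rw [hMf, Finset.mem_filter] at hk; exact hk.2.1
    have hnot : e i ∉ (((fun k : Fin n => e i + e k) '' ↑Pf) ∪ ((fun k : Fin n => e i - e k) '' ↑Mf)) := by
      rintro (⟨k, hk, hke⟩ | ⟨k, hk, hke⟩)
      · exact hAne k (hmemP k hk) hke
      · exact hBne k (hmemM k hk) hke
    have hdisj : Disjoint ((fun k : Fin n => e i + e k) '' ↑Pf) ((fun k : Fin n => e i - e k) '' ↑Mf) := by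
      rw [Set.disjoint_left]
      rintro v ⟨a, ha, rfl⟩ ⟨b, hb, hEq⟩
      have hai : a ≠ i := ne_of_gt (hmemP a ha)
      have h1 := congrFun hEq a
      simp only [Pi.sub_apply, Pi.add_apply, e_apply_ne hai, e_apply_self] at h1
      rcases eq_or_ne a b with rfl | hab
      · rw [e_apply_self] at h1; norm_num at h1
      · rw [e_apply_ne (fun hc => hab hc)] at h1; norm_num at h1
    rw [invi, hS, Set.ncard_insert_of_notMem hnot (hfA.union hfB),
      Set.ncard_union_eq hdisj hfA hfB,
      Set.ncard_image_of_injective _ hinjA, Set.ncard_image_of_injective _ hinjB,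
      Set.ncard_coe_finset, Set.ncard_coe_finset]
    have key : Pf.card + Mf.card
        = (Finset.univ.filter fun k : Fin n => i < k ∧ |π.val k| < (j : ℤ)).card
          + 2 * (Finset.univ.filter fun k : Fin n => i < k ∧ (j : ℤ) < |π.val k|).card := by
      rw [hPf, hMf, Finset.card_filter, Finset.card_filter, Finset.card_filter, Finset.card_filter,
        Finset.mul_sum, ← Finset.sum_add_distrib, ← Finset.sum_add_distrib]
      refine Finset.sum_congr rfl fun k _ => ?_
      by_cases hik : i < k
      · have hki : k ≠ i := ne_of_gt hik
        have hne : π.σ k ≠ π.σ i := fun hc => hki (π.σ.injective hc)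
        have h1 : (|π.val k| < (j:ℤ)) ↔ π.σ k < π.σ i := by
          rw [habs k, ← hji, Fin.lt_def]; omega
        have h2 : ((j:ℤ) < |π.val k|) ↔ π.σ i < π.σ k := by
          rw [habs k, ← hji, Fin.lt_def]; omega
        rcases π.hε k with he | he <;> rcases lt_or_gt_of_ne hne with hlt | hlt <;>
          simp [hik, he, h1, h2, hlt, asymm hlt]
      · simp [hik]
    omega
end
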